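/- Let A be a real m × n matrix, b ∈ ℝ^m, α > 0, and μ > 0. Define G_μ(x) = (α/2)‖A x − b‖₂² + Φ_μ(x). Then x̂ ∈ ℝⁿ is a local minimizer of G_μ if and only if |x̂_i| ≠ μ for all i = 1, …, n and α Aᵀ(A x̂ − b) + (2/μ²)(𝟏 − H_μ(x̂)) ∘ x̂ = 0. -/

import Mathlib

/-- Scalar truncated Huber function: φ_μ(t) = min(1, t²/μ²). -/
noncomputable def phiTH (μ t : ℝ) : ℝ := min 1 (t ^ 2 / μ ^ 2)

/-- Truncated Huber penalty: Φ_μ(x) = Σ_i φ_μ(x_i). -/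
noncomputable def PhiTH {n : ℕ} (μ : ℝ) (x : Fin n → ℝ) : ℝ := ∑ i, phiTH μ (x i)

/-- Euclidean norm of a vector. -/
noncomputable def norm2 {m : ℕ} (u : Fin m → ℝ) : ℝ := Real.sqrt (∑ i, (u i) ^ 2)

/-- Filter operator H_μ: (H_μ(x))_i = 0 if |x_i| ≤ μ, and 1 if |x_i| > μ. -/
noncomputable def Hfilter {n : ℕ} (μ : ℝ) (x : Fin n → ℝ) : Fin n → ℝ :=
  fun i => if μ < |x i| then 1 else 0

/-- The objective G_μ(x) = (α/2)‖Ax − b‖₂² + Φ_μ(x). -/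
noncomputable def Gobj {m n : ℕ} (A : Matrix (Fin m) (Fin n) ℝ) (b : Fin m → ℝ)
    (α μ : ℝ) (x : Fin n → ℝ) : ℝ :=
  α / 2 * (norm2 (A.mulVec x - b)) ^ 2 + PhiTH μ x

/-!
Write `g = α Aᵀ(A x̂ − b)`. Expanding the square gives
`G(x̂ + h) − G(x̂) = (α/2)‖A h‖² + Σₖ (gₖ hₖ + φ(x̂ₖ + hₖ) − φ(x̂ₖ))`.
Near a point `y` with `|y| < μ` the penalty is `t²/μ²`, near one with `|y| > μ` it is constant,
so `gₖ t + φ(y + t) − φ(y) ≥ 0` for small `t` exactly when the `k`-th stationarity equation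
holds; as the quadratic term is nonnegative, this gives sufficiency. For necessity, move a single
coordinate: this forces the same equation and rules out `|y| = μ`, where `φ` has a concave kink
(flat outwards, slope `2/μ` inwards) that no linear term `g t` can compensate on both sides.
-/

open Filter Topology Matrix

lemma nonneg_of_eventually_nhdsGT {a B : ℝ} (h : ∀ᶠ t in 𝓝[>] 0, 0 ≤ a * t + B * t ^ 2) :
    0 ≤ a := by
  have hlim : Tendsto (fun t => a + B * t) (𝓝[>] 0) (𝓝 a) :=
    ((continuous_const.add (continuous_const.mul continuous_id)).tendsto' 0 a (by simp)).mono_left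
      nhdsWithin_le_nhds
  refine ge_of_tendsto hlim ?_
  filter_upwards [h, self_mem_nhdsWithin] with t ht (htpos : 0 < t)
  nlinarith

lemma nonpos_of_eventually_nhdsLT {a B : ℝ} (h : ∀ᶠ t in 𝓝[<] 0, 0 ≤ a * t + B * t ^ 2) :
    a ≤ 0 := by
  have hlim : Tendsto (fun t => a + B * t) (𝓝[<] 0) (𝓝 a) :=
    ((continuous_const.add (continuous_const.mul continuous_id)).tendsto' 0 a (by simp)).mono_left
      nhdsWithin_le_nhds
  refine le_of_tendsto hlim ?_
  filter_upwards [h, self_mem_nhdsWithin] with t ht (htneg : t < 0)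
  nlinarith

lemma eq_zero_of_eventually_nhds {a B : ℝ} (h : ∀ᶠ t in 𝓝 0, 0 ≤ a * t + B * t ^ 2) :
    a = 0 :=
  le_antisymm (nonpos_of_eventually_nhdsLT (nhdsWithin_le_nhds h))
    (nonneg_of_eventually_nhdsGT (nhdsWithin_le_nhds h))

lemma phiTH_of_abs_le {μ t : ℝ} (hμ : 0 < μ) (h : |t| ≤ μ) : phiTH μ t = t ^ 2 / μ ^ 2 := by
  rw [phiTH, min_eq_right ((div_le_one (by positivity)).2 ?_)]
  rw [← sq_abs t]
  exact pow_le_pow_left₀ (abs_nonneg t) h 2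

lemma phiTH_of_le_abs {μ t : ℝ} (hμ : 0 < μ) (h : μ ≤ |t|) : phiTH μ t = 1 := by
  rw [phiTH, min_eq_left ((one_le_div (by positivity)).2 ?_)]
  rw [← sq_abs t]
  exact pow_le_pow_left₀ hμ.le h 2

lemma phiTH_add_sub_of_abs_le {μ y t : ℝ} (hμ : 0 < μ) (hy : |y| ≤ μ) (ht : |y + t| ≤ μ) :
    phiTH μ (y + t) - phiTH μ y = 2 * y / μ ^ 2 * t + 1 / μ ^ 2 * t ^ 2 := by
  rw [phiTH_of_abs_le hμ hy, phiTH_of_abs_le hμ ht]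
  ring

lemma phiTH_add_of_le_abs {μ y t : ℝ} (hμ : 0 < μ) (hy : μ ≤ |y|) (ht : μ ≤ |y + t|) :
    phiTH μ (y + t) = phiTH μ y := by
  rw [phiTH_of_le_abs hμ hy, phiTH_of_le_abs hμ ht]

lemma tendsto_abs_add_nhds_zero (y : ℝ) : Tendsto (fun t => |y + t|) (𝓝 0) (𝓝 |y|) := by
  simpa using ((continuous_const.add continuous_id).abs.tendsto (0 : ℝ) : _)

lemma phiTH_neg (μ t : ℝ) : phiTH μ (-t) = phiTH μ t := by
  simp [phiTH]

section Scalar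

variable {μ c d y : ℝ}

lemma ne_of_eventually_nonneg_add_phiTH (hμ : 0 < μ)
    (h : ∀ᶠ t in 𝓝 0, 0 ≤ c * t + d * t ^ 2 + (phiTH μ (y + t) - phiTH μ y)) : y ≠ μ := by
  rintro rfl
  have hright : 0 ≤ c := by
    refine nonneg_of_eventually_nhdsGT (B := d) ?_
    filter_upwards [nhdsWithin_le_nhds h, self_mem_nhdsWithin] with t ht (htpos : 0 < t)
    rw [phiTH_add_of_le_abs hμ (le_abs_self y) (by rw [abs_of_pos (by linarith)]; linarith)] at ht
    linarith
  have hleft : c + 2 * y / y ^ 2 ≤ 0 := by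
    refine nonpos_of_eventually_nhdsLT (B := d + 1 / y ^ 2) ?_
    filter_upwards [nhdsWithin_le_nhds h, self_mem_nhdsWithin,
      nhdsWithin_le_nhds (lt_mem_nhds (neg_lt_zero.2 hμ))] with t ht (htneg : t < 0) hty
    rw [phiTH_add_sub_of_abs_le hμ (abs_of_pos hμ).le
      (abs_le.2 ⟨by linarith, by linarith⟩)] at ht
    linarith
  have : 0 < 2 * y / y ^ 2 := by positivity
  linarith

lemma abs_ne_of_eventually_nonneg_add_phiTH (hμ : 0 < μ)
    (h : ∀ᶠ t in 𝓝 0, 0 ≤ c * t + d * t ^ 2 + (phiTH μ (y + t) - phiTH μ y)) : |y| ≠ μ := by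
  rw [Ne, abs_eq hμ.le, not_or]
  refine ⟨ne_of_eventually_nonneg_add_phiTH hμ h, fun hy =>
    ne_of_eventually_nonneg_add_phiTH (c := -c) (d := d) (y := -y) hμ ?_ (by linarith)⟩
  filter_upwards [(continuous_neg.tendsto' (0 : ℝ) 0 neg_zero).eventually h] with t ht
  rw [show -y + t = -(y + -t) by ring, phiTH_neg, phiTH_neg]
  linear_combination ht

theorem stationary_of_eventually_nonneg_add_phiTH (hμ : 0 < μ)
    (h : ∀ᶠ t in 𝓝 0, 0 ≤ c * t + d * t ^ 2 + (phiTH μ (y + t) - phiTH μ y)) :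
    |y| ≠ μ ∧ c + 2 / μ ^ 2 * (1 - if μ < |y| then 1 else 0) * y = 0 := by
  have hy := abs_ne_of_eventually_nonneg_add_phiTH hμ h
  refine ⟨hy, ?_⟩
  rcases hy.lt_or_gt with hlt | hgt
  · have hc : c + 2 * y / μ ^ 2 = 0 := by
      refine eq_zero_of_eventually_nhds (B := d + 1 / μ ^ 2) ?_
      filter_upwards [h, (tendsto_abs_add_nhds_zero y).eventually_lt_const hlt] with t ht hty
      rw [phiTH_add_sub_of_abs_le hμ hlt.le hty.le] at ht
      linarith
    rw [if_neg hlt.not_gt]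
    linear_combination hc
  · have hc : c = 0 := by
      refine eq_zero_of_eventually_nhds (B := d) ?_
      filter_upwards [h, (tendsto_abs_add_nhds_zero y).eventually_const_lt hgt] with t ht hty
      rw [phiTH_add_of_le_abs hμ hgt.le hty.le] at ht
      linarith
    rw [if_pos hgt, hc]
    ring

theorem eventually_nonneg_add_phiTH_of_stationary (hμ : 0 < μ) (hy : |y| ≠ μ)
    (hc : c + 2 / μ ^ 2 * (1 - if μ < |y| then 1 else 0) * y = 0) :
    ∀ᶠ t in 𝓝 0, 0 ≤ c * t + (phiTH μ (y + t) - phiTH μ y) := by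
  rcases hy.lt_or_gt with hlt | hgt
  · rw [if_neg hlt.not_gt] at hc
    filter_upwards [(tendsto_abs_add_nhds_zero y).eventually_lt_const hlt] with t hty
    rw [phiTH_add_sub_of_abs_le hμ hlt.le hty.le,
      show c = -(2 * y / μ ^ 2) by linear_combination hc]
    ring_nf
    positivity
  · rw [if_pos hgt, sub_self, mul_zero, zero_mul, add_zero] at hc
    filter_upwards [(tendsto_abs_add_nhds_zero y).eventually_const_lt hgt] with t hty
    rw [phiTH_add_of_le_abs hμ hgt.le hty.le, hc]
    simp

end Scalar

lemma norm2_sq {m : ℕ} (u : Fin m → ℝ) : norm2 u ^ 2 = u ⬝ᵥ u := by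
  rw [norm2, Real.sq_sqrt (Finset.sum_nonneg fun i _ => sq_nonneg _)]
  simp only [dotProduct, sq]

lemma abs_le_norm2 {n : ℕ} (u : Fin n → ℝ) (i : Fin n) : |u i| ≤ norm2 u := by
  rw [← Real.sqrt_sq_eq_abs]
  exact Real.sqrt_le_sqrt (Finset.single_le_sum (fun j _ => sq_nonneg (u j)) (Finset.mem_univ i))

lemma continuous_norm2 {n : ℕ} : Continuous (norm2 : (Fin n → ℝ) → ℝ) := by
  unfold norm2
  fun_prop

lemma eventually_nhds_iff_norm2 {n : ℕ} {x₀ : Fin n → ℝ} {p : (Fin n → ℝ) → Prop} :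
    (∀ᶠ x in 𝓝 x₀, p x) ↔ ∃ δ > 0, ∀ x, norm2 (x - x₀) < δ → p x := by
  constructor
  · intro h
    obtain ⟨δ, hδ, hp⟩ := Metric.eventually_nhds_iff.1 h
    refine ⟨δ, hδ, fun x hx => hp ?_⟩
    rw [dist_eq_norm, pi_norm_lt_iff hδ]
    exact fun i => (abs_le_norm2 (x - x₀) i).trans_lt hx
  · rintro ⟨δ, hδ, hp⟩
    have hball : ∀ᶠ x in 𝓝 x₀, norm2 (x - x₀) < δ :=
      (continuous_norm2.comp (continuous_id.sub continuous_const)).tendsto' x₀ 0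
        (by simp [norm2]) |>.eventually_lt_const hδ
    exact hball.mono hp

theorem Gobj_add_sub {m n : ℕ} (A : Matrix (Fin m) (Fin n) ℝ) (b : Fin m → ℝ) (α μ : ℝ)
    (x h : Fin n → ℝ) :
    Gobj A b α μ (x + h) - Gobj A b α μ x = α / 2 * (A *ᵥ h ⬝ᵥ A *ᵥ h) +
      ∑ k, ((α • Aᵀ *ᵥ (A *ᵥ x - b)) k * h k + (phiTH μ (x k + h k) - phiTH μ (x k))) := by
  have hres : A *ᵥ (x + h) - b = (A *ᵥ x - b) + A *ᵥ h := by
    rw [mulVec_add]; abel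
  have hcross : (A *ᵥ x - b) ⬝ᵥ A *ᵥ h = Aᵀ *ᵥ (A *ᵥ x - b) ⬝ᵥ h := by
    rw [dotProduct_mulVec, mulVec_transpose]
  rw [Finset.sum_add_distrib, Finset.sum_sub_distrib]
  change _ = _ + ((α • Aᵀ *ᵥ (A *ᵥ x - b)) ⬝ᵥ h + _)
  simp only [Gobj, PhiTH, norm2_sq, hres, add_dotProduct, dotProduct_add,
    dotProduct_comm (A *ᵥ h) (A *ᵥ x - b), hcross, smul_dotProduct, smul_eq_mul, Pi.add_apply]
  ring

theorem Gobj_add_single_sub {m n : ℕ} (A : Matrix (Fin m) (Fin n) ℝ) (b : Fin m → ℝ) (α μ : ℝ)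
    (x : Fin n → ℝ) (i : Fin n) (t : ℝ) :
    Gobj A b α μ (x + Pi.single i t) - Gobj A b α μ x =
      (α • Aᵀ *ᵥ (A *ᵥ x - b)) i * t + α / 2 * (∑ j, A j i ^ 2) * t ^ 2 +
        (phiTH μ (x i + t) - phiTH μ (x i)) := by
  rw [Gobj_add_sub, Finset.sum_eq_single i (fun k _ hk => by simp [hk]) (by simp)]
  simp only [mulVec_single, dotProduct, Pi.smul_apply, col_apply, op_smul_eq_smul,
    Pi.single_eq_same, smul_eq_mul, Finset.mul_sum, Finset.sum_mul]
  ring_nf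

theorem isLocalMin_Gobj_iff {m n : ℕ} (A : Matrix (Fin m) (Fin n) ℝ) (b : Fin m → ℝ)
    {α μ : ℝ} (hα : 0 < α) (hμ : 0 < μ) (xh : Fin n → ℝ) :
    IsLocalMin (Gobj A b α μ) xh ↔ ((∀ i, |xh i| ≠ μ) ∧
      α • Aᵀ *ᵥ (A *ᵥ xh - b) + (fun i => 2 / μ ^ 2 * (1 - Hfilter μ xh i) * xh i) = 0) := by
  set g := α • Aᵀ *ᵥ (A *ᵥ xh - b)
  constructor
  · intro hmin
    have key (i : Fin n) : |xh i| ≠ μ ∧ g i + 2 / μ ^ 2 * (1 - Hfilter μ xh i) * xh i = 0 := by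
      refine stationary_of_eventually_nonneg_add_phiTH (d := α / 2 * ∑ j, A j i ^ 2) hμ ?_
      have hline : Tendsto (fun t => xh + Pi.single i t) (𝓝 0) (𝓝 xh) :=
        (continuous_const.add (continuous_single i)).tendsto' 0 xh (by simp)
      filter_upwards [hline.eventually hmin] with t ht
      rw [← Gobj_add_single_sub]
      exact sub_nonneg.2 ht
    exact ⟨fun i => (key i).1, funext fun i => (key i).2⟩
  · rintro ⟨hne, hgrad⟩
    have hcoord (i : Fin n) : ∀ᶠ x in 𝓝 xh,
        0 ≤ g i * (x - xh) i + (phiTH μ (xh i + (x - xh) i) - phiTH μ (xh i)) :=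
      (((continuous_apply i).comp (continuous_id.sub continuous_const)).tendsto' xh 0
        (by simp)).eventually
        (eventually_nonneg_add_phiTH_of_stationary hμ (hne i) (congrFun hgrad i))
    filter_upwards [eventually_all.2 hcoord] with x hx
    have hquad : 0 ≤ α / 2 * (A *ᵥ (x - xh) ⬝ᵥ A *ᵥ (x - xh)) :=
      mul_nonneg (by positivity) (Finset.sum_nonneg fun j _ => mul_self_nonneg _)
    have hexp := Gobj_add_sub A b α μ xh (x - xh)
    rw [add_sub_cancel] at hexp
    linarith [Finset.sum_nonneg fun k (_ : k ∈ Finset.univ) => hx k]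

theorem stmt15 {m n : ℕ} (A : Matrix (Fin m) (Fin n) ℝ) (b : Fin m → ℝ)
    (α μ : ℝ) (hα : 0 < α) (hμ : 0 < μ) (xh : Fin n → ℝ) :
    (∃ δ > 0, ∀ x : Fin n → ℝ, norm2 (x - xh) < δ →
      Gobj A b α μ xh ≤ Gobj A b α μ x) ↔
    ((∀ i, |xh i| ≠ μ) ∧
      α • A.transpose.mulVec (A.mulVec xh - b) +
        (fun i => (2 / μ ^ 2) * (1 - Hfilter μ xh i) * xh i) = 0) := by
  rw [← eventually_nhds_iff_norm2]
  exact isLocalMin_Gobj_iff A b hα hμ xh
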